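/- arXiv:1005.2242 — 2 statements merged into one kernel-verified Lean document; each statement's English description precedes it below -/
import Mathlib

section
/- Let Ω be a finite set and let μ be a q-measure on P(Ω). Then there exists a unique symmetric function α : Ω × Ω → ℝ (α(x, y) = α(y, x) for all x, y) such that μ(A) = Σ_{x ∈ A} Σ_{y ∈ A} α(x, y) for every A ⊆ Ω. Explicitly, α(x, x) = μ({x}) and, for x ≠ y, α(x, y) = (1/2)[μ({x, y}) − μ({x}) − μ({y})]. -/
def Grade2Additive {Ω : Type*} [DecidableEq Ω] (μ : Finset Ω → ℝ) : Prop :=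
  ∀ A B C : Finset Ω, Disjoint A B → Disjoint A C → Disjoint B C →
    μ (A ∪ B ∪ C) = μ (A ∪ B) + μ (A ∪ C) + μ (B ∪ C) - μ A - μ B - μ C

lemma g2_empty {Ω : Type*} [DecidableEq Ω] (μ : Finset Ω → ℝ)
    (hμ : Grade2Additive μ) : μ ∅ = 0 := by
  have := hμ ∅ ∅ ∅ (by simp) (by simp) (by simp)
  simp at this
  linarith

lemma g2_insert {Ω : Type*} [DecidableEq Ω] (μ : Finset Ω → ℝ)
    (hμ : Grade2Additive μ) (a : Ω) :
    ∀ A : Finset Ω, a ∉ A →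
      μ (insert a A) = μ A + μ {a} + ∑ y ∈ A, (μ {a, y} - μ {a} - μ {y}) := by
  intro A
  induction A using Finset.induction_on with
  | empty => intro _; simp [g2_empty μ hμ]
  | @insert b A hb ih =>
    intro ha
    have hab : a ≠ b := by intro h; exact ha (h ▸ Finset.mem_insert_self b A)
    have haA : a ∉ A := fun h => ha (Finset.mem_insert_of_mem h)
    have key := hμ {a} {b} A (by simp [hab, Ne.symm hab]) (by simp [haA])
      (by simp [hb])
    have e1 : ({a} : Finset Ω) ∪ {b} ∪ A = insert a (insert b A) := by
      ext x; simp [Finset.mem_insert, or_assoc]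
    have e2 : ({a} : Finset Ω) ∪ {b} = {a, b} := by
      ext x; simp
    have e3 : ({a} : Finset Ω) ∪ A = insert a A := by ext x; simp
    have e4 : ({b} : Finset Ω) ∪ A = insert b A := by ext x; simp
    rw [e1, e2, e3, e4] at key
    have ihA := ih haA
    rw [Finset.sum_insert hb]
    linarith

theorem qMeasure_symmetric_kernel {Ω : Type*} [Fintype Ω] [DecidableEq Ω]
    (μ : Finset Ω → ℝ) (hμ : Grade2Additive μ) (hpos : ∀ A, 0 ≤ μ A) :
    (∃! α : Ω → Ω → ℝ, (∀ x y, α x y = α y x) ∧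
        ∀ A : Finset Ω, μ A = ∑ x ∈ A, ∑ y ∈ A, α x y) ∧
    (∀ α : Ω → Ω → ℝ,
      ((∀ x y, α x y = α y x) ∧ ∀ A : Finset Ω, μ A = ∑ x ∈ A, ∑ y ∈ A, α x y) →
      (∀ x, α x x = μ {x}) ∧
      (∀ x y, x ≠ y → α x y = (μ {x, y} - μ {x} - μ {y}) / 2)) := by
  -- the uniqueness-of-values part
  have huval : ∀ α : Ω → Ω → ℝ,
      ((∀ x y, α x y = α y x) ∧ ∀ A : Finset Ω, μ A = ∑ x ∈ A, ∑ y ∈ A, α x y) →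
      (∀ x, α x x = μ {x}) ∧
      (∀ x y, x ≠ y → α x y = (μ {x, y} - μ {x} - μ {y}) / 2) := by
    rintro α ⟨hsym, hrep⟩
    have hxx : ∀ x, α x x = μ {x} := by
      intro x
      have := hrep {x}
      simp at this
      linarith
    refine ⟨hxx, ?_⟩
    intro x y hxy
    have h2 := hrep {x, y}
    rw [Finset.sum_pair hxy] at h2
    rw [Finset.sum_pair hxy, Finset.sum_pair hxy] at h2
    have hs := hsym y x
    have h1 := hxx x
    have h3 := hxx y
    linarith
  refine ⟨?_, huval⟩
  set α : Ω → Ω → ℝ := fun x y =>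
    if x = y then μ {x} else (μ {x, y} - μ {x} - μ {y}) / 2 with hα
  have hsym : ∀ x y, α x y = α y x := by
    intro x y
    by_cases h : x = y
    · subst h; rfl
    · have : ({x, y} : Finset Ω) = {y, x} := by ext z; simp [or_comm]
      simp [hα, h, Ne.symm h, this]
      ring
  have hrep : ∀ A : Finset Ω, μ A = ∑ x ∈ A, ∑ y ∈ A, α x y := by
    intro A
    induction A using Finset.induction_on with
    | empty => simp [g2_empty μ hμ]
    | @insert a A ha ih =>
      rw [g2_insert μ hμ a A ha, ih]
      rw [Finset.sum_insert ha, Finset.sum_insert ha]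
      have hterm : ∀ x ∈ A, (∑ y ∈ insert a A, α x y) = α x a + ∑ y ∈ A, α x y := by
        intro x _; rw [Finset.sum_insert ha]
      rw [Finset.sum_congr rfl hterm, Finset.sum_add_distrib]
      have h1 : α a a = μ {a} := by simp [hα]
      have h2 : ∀ y ∈ A, α a y = (μ {a, y} - μ {a} - μ {y}) / 2 := by
        intro y hy
        have : a ≠ y := fun h => ha (h ▸ hy)
        simp [hα, this]
      have h3 : (∑ y ∈ A, α a y) = ∑ y ∈ A, (μ {a, y} - μ {a} - μ {y}) / 2 :=
        Finset.sum_congr rfl h2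
      have h4 : (∑ x ∈ A, α x a) = ∑ y ∈ A, (μ {a, y} - μ {a} - μ {y}) / 2 := by
        rw [Finset.sum_congr rfl (fun x hx => (hsym x a).trans (h2 x hx))]
      have h5 : (∑ y ∈ A, (μ {a, y} - μ {a} - μ {y})) =
          2 * ∑ y ∈ A, (μ {a, y} - μ {a} - μ {y}) / 2 := by
        rw [Finset.mul_sum]; congr 1; ext y; ring
      rw [h1, h3, h4, h5]
      ring
  refine ⟨α, ⟨hsym, hrep⟩, ?_⟩
  intro β hβ
  obtain ⟨hβxx, hβxy⟩ := huval β hβ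
  obtain ⟨hαxx, hαxy⟩ := huval α ⟨hsym, hrep⟩
  funext x y
  by_cases h : x = y
  · subst h; rw [hβxx, hαxx]
  · rw [hβxy x y h, hαxy x y h]
end

section
/- Let n be a natural number and let 0 ≤ a ≤ b be real numbers. Then ∫_a^b ∫_a^b min(x^n, y^n) dx dy = (2/((n+1)(n+2)))·[b^{n+2} − a^{n+1}((n+2)b − (n+1)a)]. -/
/-!
Since `x ↦ x ^ n` is monotone on `[a, b] ⊆ [0, ∞)`, for fixed `y ∈ [a, b]` the inner integrand is
`x ^ n` on `[a, y]` and the constant `y ^ n` on `[y, b]`. The inner integral is therefore the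
polynomial `(y ^ (n + 1) - a ^ (n + 1)) / (n + 1) + (b - y) * y ^ n` in `y`, whose integral over
`[a, b]` is computed termwise.
-/

open intervalIntegral Set

theorem integral_min_apply_of_monotoneOn {f : ℝ → ℝ} {a b y : ℝ}
    (hf : MonotoneOn f (Icc a b)) (hy : y ∈ Icc a b) :
    ∫ x in a..b, min (f x) (f y) = (∫ x in a..y, f x) + (b - y) * f y := by
  have hmin : MonotoneOn (fun x => min (f x) (f y)) (Icc a b) :=
    fun x hx z hz hxz => min_le_min_right _ (hf hx hz hxz)
  have hint : ∀ c ∈ Icc a b, ∀ d ∈ Icc a b,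
      IntervalIntegrable (fun x => min (f x) (f y)) MeasureTheory.volume c d :=
    fun c hc d hd => (hmin.mono (uIcc_subset_Icc hc hd)).intervalIntegrable
  have left : ∫ x in a..y, min (f x) (f y) = ∫ x in a..y, f x :=
    integral_congr fun x hx => by
      rw [uIcc_of_le hy.1] at hx
      exact min_eq_left (hf ⟨hx.1, hx.2.trans hy.2⟩ hy hx.2)
  have right : ∫ x in y..b, min (f x) (f y) = ∫ _ in y..b, f y :=
    integral_congr fun x hx => by
      rw [uIcc_of_le hy.2] at hx
      exact min_eq_right (hf hy ⟨hy.1.trans hx.1, hx.2⟩ hx.1)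
  have ha : a ∈ Icc a b := left_mem_Icc.2 (hy.1.trans hy.2)
  have hb : b ∈ Icc a b := right_mem_Icc.2 (hy.1.trans hy.2)
  rw [← integral_add_adjacent_intervals (hint a ha y hy) (hint y hy b hb), left, right,
    integral_const, smul_eq_mul]

theorem integral_min_pow {n : ℕ} {a b y : ℝ} (ha : 0 ≤ a) (hy : y ∈ Icc a b) :
    ∫ x in a..b, min (x ^ n) (y ^ n) =
      (y ^ (n + 1) - a ^ (n + 1)) / (n + 1) + (b - y) * y ^ n := by
  have hmono : MonotoneOn (fun x : ℝ => x ^ n) (Icc a b) :=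
    fun x hx _ _ hxz => pow_le_pow_left₀ (ha.trans hx.1) hxz n
  rw [integral_min_apply_of_monotoneOn hmono hy, integral_pow]

theorem qIntegral_pow (n : ℕ) (a b : ℝ) (ha : 0 ≤ a) (hab : a ≤ b) :
    (∫ y in a..b, ∫ x in a..b, min (x ^ n) (y ^ n))
      = 2 / (((n : ℝ) + 1) * ((n : ℝ) + 2)) *
        (b ^ (n + 2) - a ^ (n + 1) * (((n : ℝ) + 2) * b - ((n : ℝ) + 1) * a)) := by
  rw [integral_congr fun y hy => integral_min_pow ha (uIcc_of_le hab ▸ hy)]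
  simp only [sub_mul, ← pow_succ']
  rw [integral_add, integral_div, integral_sub, integral_sub, integral_const_mul, integral_pow,
    integral_pow, integral_const, smul_eq_mul]
  · push_cast
    field_simp
    ring
  all_goals exact Continuous.intervalIntegrable (by fun_prop) a b
end
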